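/- For all p, q ∈ ℝ and all X ∈ M₃(ℂ), N_{p,q}(X) = (1−m−n)·X + m·R Xᵗ R* + (n/3)·Tr(X)·Id₃, where m = −p/2 + 3q/10, n = 3p/2 + 9q/10, Xᵗ is the transpose of X, and R = E₀₂ − E₁₁ + E₂₀ ∈ M₃(ℂ). -/
import Mathlib


open Matrix BigOperators
open scoped Kronecker ComplexOrder

noncomputable section


/-- `Φ^{2→2}_2`. -/
def Phi2 (A : Matrix (Fin 3) (Fin 3) ℂ) : Matrix (Fin 3) (Fin 3) ℂ :=
  (1 / 2 : ℂ) •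
    !![A 0 0 + A 1 1, A 1 2, -(A 0 2);
       A 2 1, A 0 0 + A 2 2, A 0 1;
       -(A 2 0), A 1 0, A 1 1 + A 2 2]

/-- `Φ^{2→2}_4`. -/
def Phi4 (A : Matrix (Fin 3) (Fin 3) ℂ) : Matrix (Fin 3) (Fin 3) ℂ :=
  (1 / 10 : ℂ) •
    !![A 0 0 + 3 * A 1 1 + 6 * A 2 2, -2 * A 0 1 - 3 * A 1 2, A 0 2;
       -2 * A 1 0 - 3 * A 2 1, 3 * A 0 0 + 4 * A 1 1 + 3 * A 2 2, -3 * A 0 1 - 2 * A 1 2;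
       A 2 0, -3 * A 1 0 - 2 * A 2 1, 6 * A 0 0 + 3 * A 1 1 + A 2 2]

/-- `N_{p,q} = (1-p-q)Φ₀ + pΦ₂ + qΦ₄` (with `Φ₀ = id`). -/
def Nmap (p q : ℝ) (A : Matrix (Fin 3) (Fin 3) ℂ) : Matrix (Fin 3) (Fin 3) ℂ :=
  ((1 - p - q : ℝ) : ℂ) • A + ((p : ℝ) : ℂ) • Phi2 A + ((q : ℝ) : ℂ) • Phi4 A

/-- `R = E₀₂ - E₁₁ + E₂₀`. -/
def Rmat : Matrix (Fin 3) (Fin 3) ℂ := !![0, 0, 1; 0, -1, 0; 1, 0, 0]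

/-- `N_{p,q}(X) = (1-m-n)·X + m·R Xᵗ R* + (n/3)·Tr(X)·Id₃` with
`m = -p/2 + 3q/10` and `n = 3p/2 + 9q/10`. -/
theorem stmt_11 (p q m n : ℝ) (hm : m = -p / 2 + 3 * q / 10)
    (hn : n = 3 * p / 2 + 9 * q / 10) (X : Matrix (Fin 3) (Fin 3) ℂ) :
    Nmap p q X
      = ((1 - m - n : ℝ) : ℂ) • X + ((m : ℝ) : ℂ) • (Rmat * Xᵀ * Rmatᴴ)
        + ((n / 3 : ℝ) : ℂ) • X.trace • (1 : Matrix (Fin 3) (Fin 3) ℂ) := by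
  subst hm hn
  ext i j
  simp [Nmap, Phi2, Phi4, Rmat, Matrix.mul_apply, Matrix.trace, Matrix.one_apply,
    Fin.sum_univ_succ, Matrix.diag]
  fin_cases i <;> fin_cases j <;>
    simp [Matrix.vecMul, dotProduct, Matrix.mul_apply, Fin.sum_univ_succ,
      Matrix.conjTranspose_apply] <;> ring

end
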